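/- arXiv:1702.01892 — 2 statements merged into one kernel-verified Lean document; each statement's English description precedes it below -/
import Mathlib

section
/- Let M be a saturated model of a complete theory T, A a small subset of M, and D ⊆ M^n a relation that is not definable over A but such that (M, D) is saturated. Then there exists an automorphism f of M fixing A pointwise with f(D) ≠ D; that is, the orbit o(D/A) is not a singleton. -/
open FirstOrder FirstOrder.Language Set Cardinal

universe u v w

namespace Paper

/-- The language with a single `n`-ary relation symbol and no function symbols. -/
def relLang (n : ℕ) : FirstOrder.Language :=
  { Functions := fun _ => Empty, Relations := fun m => PLift (m = n) }

/-- The expansion of an `L`-structure `M` by a new `n`-ary relation interpreted as `D`. -/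
def expStruct (L : FirstOrder.Language) (M : Type w) [L.Structure M] (n : ℕ)
    (D : Set (Fin n → M)) : (L.sum (relLang n)).Structure M where
  funMap := fun {m} f x =>
    Sum.casesOn f (fun f => Structure.funMap f x) (fun f => f.elim)
  RelMap := fun {m} r x =>
    Sum.casesOn r (fun r => Structure.RelMap r x)
      (fun r => (fun i : Fin n => x (Fin.cast r.down.symm i)) ∈ D)

/-- `(M, D) ≡ (M, D')`: the two expansions are elementarily equivalent. -/
def eeqRel (L : FirstOrder.Language) (M : Type w) [L.Structure M] (n : ℕ)
    (D D' : Set (Fin n → M)) : Prop :=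
  @FirstOrder.Language.ElementarilyEquivalent (L.sum (relLang n)) M M
    (expStruct L M n D) (expStruct L M n D')

/-- Expansion by a unary predicate given as a set. -/
def expStruct1 (L : FirstOrder.Language) (M : Type w) [L.Structure M] (H : Set M) :
    (L.sum (relLang 1)).Structure M :=
  expStruct L M 1 {x | x 0 ∈ H}

/-- `(M, H) ≡ (N, H')` for unary predicates on possibly different structures. -/
def eeqPair (L : FirstOrder.Language) (M : Type w) (N : Type w) [L.Structure M] [L.Structure N]
    (H : Set M) (H' : Set N) : Prop :=
  @FirstOrder.Language.ElementarilyEquivalent (L.sum (relLang 1)) M N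
    (expStruct1 L M H) (expStruct1 L N H')

variable (L : FirstOrder.Language) (M : Type w) [L.Structure M]

/-- A structure is saturated if every finitely satisfiable collection of formulas in one
variable over a parameter set of cardinality less than that of the structure is realized. -/
def IsSaturated : Prop :=
  ∀ A : Set M, #A < #M →
    ∀ p : Set ((L[[A]]).Formula (Fin 1)),
      (∀ S : Finset ((L[[A]]).Formula (Fin 1)), ↑S ⊆ p →
        ∃ a : M, ∀ φ ∈ S, φ.Realize (fun _ => a)) →
      ∃ a : M, ∀ φ ∈ p, φ.Realize (fun _ => a)

/-- ω-saturation: types over finite parameter sets are realized. -/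
def IsOmegaSaturated : Prop :=
  ∀ A : Set M, A.Finite →
    ∀ p : Set ((L[[A]]).Formula (Fin 1)),
      (∀ S : Finset ((L[[A]]).Formula (Fin 1)), ↑S ⊆ p →
        ∃ a : M, ∀ φ ∈ S, φ.Realize (fun _ => a)) →
      ∃ a : M, ∀ φ ∈ p, φ.Realize (fun _ => a)

/-- Model-theoretic algebraic closure. -/
def acl (A : Set M) : Set M :=
  {b | ∃ φ : (L[[A]]).Formula (Fin 1),
    φ.Realize (fun _ => b) ∧ {c : M | φ.Realize (fun _ => c)}.Finite}

/-- Model-theoretic definable closure. -/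
def dcl (A : Set M) : Set M :=
  {b | ∃ φ : (L[[A]]).Formula (Fin 1), {c : M | φ.Realize (fun _ => c)} = {b}}

/-- The exchange property for algebraic closure. -/
def AclExchange : Prop :=
  ∀ (A : Set M) (x y : M), x ∈ acl L M (A ∪ {y}) → x ∉ acl L M A → y ∈ acl L M (A ∪ {x})

/-- Semantic elimination of the quantifier `∃^∞`. -/
def ElimInfinity : Prop :=
  ∀ (n : ℕ) (φ : L.Formula (Fin n ⊕ Fin 1)), ∃ ψ : L.Formula (Fin n),
    ∀ v : Fin n → M, ψ.Realize v ↔ {x : M | φ.Realize (Sum.elim v fun _ => x)}.Infinite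

/-- `M` is (a model of) a geometric theory: `acl` has exchange and `∃^∞` is eliminated. -/
def IsGeometricOn : Prop := AclExchange L M ∧ ElimInfinity L M

/-- `a` realizes the collection `p` of formulas over `A`. -/
def Realizes1 (A : Set M) (p : Set ((L[[A]]).Formula (Fin 1))) (a : M) : Prop :=
  ∀ φ ∈ p, φ.Realize (fun _ => a)

/-- A complete 1-type over `A ⊆ M`: finitely satisfiable in `M` and maximal. -/
def IsCompleteType (A : Set M) (p : Set ((L[[A]]).Formula (Fin 1))) : Prop :=
  (∀ S : Finset ((L[[A]]).Formula (Fin 1)), ↑S ⊆ p →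
    ∃ a : M, ∀ φ ∈ S, φ.Realize (fun _ => a)) ∧
  (∀ φ : (L[[A]]).Formula (Fin 1), φ ∈ p ∨ φ.not ∈ p)

/-- A 1-type is non-algebraic if all its formulas have infinitely many solutions. -/
def NonAlgType (A : Set M) (p : Set ((L[[A]]).Formula (Fin 1))) : Prop :=
  ∀ φ ∈ p, {a : M | φ.Realize (fun _ => a)}.Infinite

/-- `(M, H)` is an `H`-structure. -/
structure IsHStructure (H : Set M) : Prop where
  indep : ∀ h ∈ H, h ∉ acl L M (H \ {h})
  density : ∀ A : Set M, A.Finite → ∀ p, IsCompleteType L M A p → NonAlgType L M A p →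
    ∃ a ∈ H, Realizes1 L M A p a
  extension : ∀ A : Set M, A.Finite → ∀ p, IsCompleteType L M A p → NonAlgType L M A p →
    ∃ a : M, Realizes1 L M A p a ∧ a ∉ acl L M (A ∪ H)

/-- Density over all small sets. -/
def DensitySmall (H : Set M) : Prop :=
  ∀ A : Set M, #A < #M → ∀ p, IsCompleteType L M A p → NonAlgType L M A p →
    ∃ a ∈ H, Realizes1 L M A p a

/-- Extension over all small sets. -/
def ExtensionSmall (H : Set M) : Prop :=
  ∀ A : Set M, #A < #M → ∀ p, IsCompleteType L M A p → NonAlgType L M A p →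
    ∃ a : M, Realizes1 L M A p a ∧ a ∉ acl L M (A ∪ H)

/-- `S` is algebraically independent over `B`. -/
def AclIndepSet (B S : Set M) : Prop :=
  ∀ s ∈ S, s ∉ acl L M (B ∪ (S \ {s}))

/-- `A` is independent from `C` over `B` in the `acl`-pregeometry. -/
def IndepOver (A B C : Set M) : Prop :=
  ∀ S ⊆ A, AclIndepSet L M B S → AclIndepSet L M (B ∪ C) S

/-- The semantic content of the axioms of `T^indep` in the structure `(M, H)`. -/
structure SatTindep (H : Set M) : Prop where
  indep : ∀ h ∈ H, h ∉ acl L M (H \ {h})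
  density : ∀ (n : ℕ) (φ : L.Formula (Fin n ⊕ Fin 1)) (v : Fin n → M),
    {x : M | φ.Realize (Sum.elim v fun _ => x)}.Infinite →
    ∃ x ∈ H, φ.Realize (Sum.elim v fun _ => x)
  extension : ∀ (n m : ℕ) (φ : L.Formula (Fin n ⊕ Fin 1))
    (ψ : L.Formula ((Fin n ⊕ Fin m) ⊕ Fin 1)) (v : Fin n → M),
    (∃ k : ℕ, ∀ u : Fin n → M, ∀ w : Fin m → M,
      {x : M | ψ.Realize (Sum.elim (Sum.elim u w) fun _ => x)}.Finite ∧
      {x : M | ψ.Realize (Sum.elim (Sum.elim u w) fun _ => x)}.ncard < k) →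
    {x : M | φ.Realize (Sum.elim v fun _ => x)}.Infinite →
    ∃ x : M, φ.Realize (Sum.elim v fun _ => x) ∧
      ∀ w : Fin m → M, (∀ i, w i ∈ H) →
        ¬ ψ.Realize (Sum.elim (Sum.elim v w) fun _ => x)

/-- `P` is (the universe of) an elementary substructure, via the Tarski–Vaught test. -/
def IsElemSubstructure (P : Set M) : Prop :=
  ∀ (n : ℕ) (φ : L.Formula (Fin n ⊕ Fin 1)) (v : Fin n → M), (∀ i, v i ∈ P) →
    (∃ x : M, φ.Realize (Sum.elim v fun _ => x)) →
    ∃ x ∈ P, φ.Realize (Sum.elim v fun _ => x)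

end Paper

/-!
If some `b ∈ D` and `c ∉ D` have the same `L`-type over `A`, the elementary map fixing `A` and
sending `b` to `c` extends, by a back-and-forth along an enumeration of `M` in order type `#M`, to
an automorphism of the saturated model `M`, and this automorphism moves `D`. Otherwise membership
in `D` only depends on the `L`-type over `A`. Saturation of `(M, D)` then yields, for each `b ∈ D`,
an `L(A)`-formula true at `b` whose solutions lie in `D`, and by compactness finitely many of these
formulas cover `D`, so `D` is `A`-definable.
-/

namespace Paper

variable {L : FirstOrder.Language.{u, v}} {M : Type w} [L.Structure M]

-- The bound `max #M ℵ₀` rather than `#M` makes every finite set small when `M` is finite.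
def IsSmall (M : Type w) {α : Type w} (s : Set α) : Prop := #s < max #M ℵ₀

section IsSmall

variable {α β : Type w} {s : Set α} {t : Set β}

theorem IsSmall.mono (ht : IsSmall M t) (h : #s ≤ #t) : IsSmall M s := h.trans_lt ht

theorem IsSmall.union {s' : Set α} (hs : IsSmall M s) (hs' : IsSmall M s') : IsSmall M (s ∪ s') :=
  (mk_union_le s s').trans_lt (add_lt_of_lt (le_max_right _ _) hs hs')

theorem isSmall_of_finite (hs : s.Finite) : IsSmall M s :=
  hs.lt_aleph0.trans_le (le_max_right _ _)

theorem IsSmall.insert (hs : IsSmall M s) (a : α) : IsSmall M (insert a s) := by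
  rw [insert_eq]; exact (isSmall_of_finite (toFinite _)).union hs

end IsSmall

theorem exists_forall_mem_of_finite {X ι : Type*} [Finite X] (t : ι → Set X)
    (h : ∀ s : Finset ι, ∃ x, ∀ i ∈ s, x ∈ t i) : ∃ x, ∀ i, x ∈ t i := by
  classical
  have := Fintype.ofFinite X
  by_contra! hne
  choose j hj using hne
  obtain ⟨x, hx⟩ := h (Finset.univ.image j)
  exact hj x (hx _ (Finset.mem_image_of_mem _ (Finset.mem_univ x)))

/-- Saturation for `k`-types over small parameter sets, the parameters being encoded as extra
free variables `β` evaluated by `v`. -/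
def RealizesSmallTypes (L : FirstOrder.Language.{u, v}) (M : Type w) [L.Structure M] (k : ℕ) :
    Prop :=
  ∀ ⦃β : Type w⦄ (v : β → M), IsSmall M (range v) → ∀ p : Set (L.Formula (β ⊕ Fin k)),
    (∀ s : Finset (L.Formula (β ⊕ Fin k)), ↑s ⊆ p → ∃ x, ∀ φ ∈ s, φ.Realize (Sum.elim v x)) →
    ∃ x, ∀ φ ∈ p, φ.Realize (Sum.elim v x)

namespace RealizesSmallTypes

variable {k : ℕ} {β : Type w} {v : β → M}

theorem exists_realize_family (h : RealizesSmallTypes L M k) (hv : IsSmall M (range v))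
    {ι : Type*} (φ : ι → L.Formula (β ⊕ Fin k))
    (hφ : ∀ s : Finset ι, ∃ x, ∀ i ∈ s, (φ i).Realize (Sum.elim v x)) :
    ∃ x, ∀ i, (φ i).Realize (Sum.elim v x) := by
  classical
  obtain ⟨x, hx⟩ := h v hv (range φ) fun t ht => by
    obtain ⟨s, -, rfl⟩ := Finset.subset_set_image_iff.1 (image_univ (f := φ) ▸ ht)
    simpa using hφ s
  exact ⟨x, fun i => hx _ ⟨i, rfl⟩⟩

end RealizesSmallTypes

theorem realizesSmallTypes_zero : RealizesSmallTypes L M 0 := fun _ _ _ p hp =>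
  ⟨default, fun φ hφ => by
    obtain ⟨x, hx⟩ := hp {φ} (by simpa using hφ)
    simpa [Subsingleton.elim x default] using hx⟩

theorem realizesSmallTypes_of_finite [Finite M] (k : ℕ) : RealizesSmallTypes L M k :=
  fun _ v _ p hp => by
  obtain ⟨x, hx⟩ := exists_forall_mem_of_finite (fun φ : p => {x | φ.1.Realize (Sum.elim v x)})
    fun s => by simpa using hp (s.map (.subtype _)) (by simp)
  exact ⟨x, fun φ hφ => hx ⟨φ, hφ⟩⟩

namespace RealizesSmallTypes

variable {k : ℕ} {β : Type w} {v : β → M}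

theorem add_one (hk : RealizesSmallTypes L M k) (h1 : RealizesSmallTypes L M 1) :
    RealizesSmallTypes L M (k + 1) := by
  classical
  intro β v hv p hp
  let e : β ⊕ Fin (k + 1) ≃ (β ⊕ Fin k) ⊕ Fin 1 :=
    (Equiv.sumCongr (.refl β) finSumFinEquiv.symm).trans (Equiv.sumAssoc _ _ _).symm
  have he (w : Fin k → M) (y : Fin 1 → M) :
      Sum.elim (Sum.elim v w) y ∘ e = Sum.elim v (Sum.elim w y ∘ finSumFinEquiv.symm) := by
    ext (b | i)
    · rfl
    · change Sum.elim (Sum.elim v w) y ((Equiv.sumAssoc _ _ _).symm (.inr (finSumFinEquiv.symm i)))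
        = Sum.elim w y (finSumFinEquiv.symm i)
      rcases finSumFinEquiv.symm i with j | j <;> rfl
  -- the first `k` coordinates realize the projections of the finite parts of `p`
  let proj (s : {s : Finset (L.Formula (β ⊕ Fin (k + 1))) // ↑s ⊆ p}) : L.Formula (β ⊕ Fin k) :=
    ((Formula.iInf fun φ : s.1 => φ.1).relabel e).iExs (Fin 1)
  have hproj (s) (w : Fin k → M) : (proj s).Realize (Sum.elim v w) ↔
      ∃ y : Fin 1 → M, ∀ φ ∈ s.1, φ.Realize (Sum.elim v (Sum.elim w y ∘ finSumFinEquiv.symm)) := by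
    simp [proj, Formula.realize_relabel, he]
  obtain ⟨w, hw⟩ := hk.exists_realize_family hv proj fun t => by
    obtain ⟨x, hx⟩ := hp (t.biUnion Subtype.val) fun φ hφ => by
      obtain ⟨s, -, hs⟩ := Finset.mem_biUnion.1 hφ
      exact s.2 hs
    have hx' : Sum.elim (x ∘ finSumFinEquiv ∘ .inl) (x ∘ finSumFinEquiv ∘ .inr) ∘
        finSumFinEquiv.symm = x := by
      rw [← Function.comp_assoc, ← Function.comp_assoc, Sum.elim_comp_inl_inr,
        Function.comp_assoc, Equiv.self_comp_symm, Function.comp_id]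
    refine ⟨x ∘ finSumFinEquiv ∘ .inl, fun s hs => (hproj s _).2 ⟨x ∘ finSumFinEquiv ∘ .inr, ?_⟩⟩
    rw [hx']
    exact fun φ hφ => hx φ (Finset.mem_biUnion.2 ⟨s, hs, hφ⟩)
  -- the last coordinate then realizes `p` over the parameters `v` and `w`
  obtain ⟨y, hy⟩ := h1.exists_realize_family (v := Sum.elim v w)
    (by rw [Sum.elim_range]; exact hv.union (isSmall_of_finite (finite_range w)))
    (fun φ : p => φ.1.relabel e) fun t => by
      obtain ⟨y, hy⟩ := (hproj ⟨t.map (.subtype _), by simp⟩ w).1 (hw _)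
      exact ⟨y, fun φ hφ => by simpa [Formula.realize_relabel, he] using hy φ (by simpa using hφ)⟩
  exact ⟨Sum.elim w y ∘ finSumFinEquiv.symm, fun φ hφ => by
    simpa [Formula.realize_relabel, he] using hy ⟨φ, hφ⟩⟩

theorem of_one (h : RealizesSmallTypes L M 1) (k : ℕ) : RealizesSmallTypes L M k := by
  induction k with
  | zero => exact realizesSmallTypes_zero
  | succ k ih => exact ih.add_one h

variable {L' : FirstOrder.Language} [L'.Structure M]

theorem exists_realize_onFormula (h : RealizesSmallTypes L' M k) (φm : L →ᴸ L')
    [φm.IsExpansionOn M] (hv : IsSmall M (range v))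
    (χ : L'.Formula (β ⊕ Fin k)) {ι : Type*} (φ : ι → L.Formula (β ⊕ Fin k))
    (hφ : ∀ s : Finset ι, ∃ x, χ.Realize (Sum.elim v x) ∧ ∀ i ∈ s, (φ i).Realize (Sum.elim v x)) :
    ∃ x, χ.Realize (Sum.elim v x) ∧ ∀ i, (φ i).Realize (Sum.elim v x) := by
  obtain ⟨x, hx⟩ := h.exists_realize_family hv
    (fun o : Option ι => o.elim χ fun i => φm.onFormula (φ i))
    fun s => by
      obtain ⟨x, hχ, hx⟩ := hφ s.eraseNone
      refine ⟨x, fun o ho => ?_⟩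
      cases o with
      | none => exact hχ
      | some i => simpa using hx i (Finset.mem_eraseNone.2 ho)
  exact ⟨x, hx none, fun i => by simpa using hx (some i)⟩

theorem of_lhom (h : RealizesSmallTypes L' M k) (φm : L →ᴸ L') [φm.IsExpansionOn M] :
    RealizesSmallTypes L M k := fun _ v hv p hp => by
  obtain ⟨x, -, hx⟩ := h.exists_realize_onFormula φm hv ⊤ (fun φ : p => φ.1) fun s => by
    simpa using hp (s.map (.subtype _)) (by simp)
  exact ⟨x, fun φ hφ => hx ⟨φ, hφ⟩⟩

end RealizesSmallTypes

theorem realizesSmallTypes_one_of_isSaturated (h : IsSaturated L M) : RealizesSmallTypes L M 1 := by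
  classical
  intro β v hv p hp
  rcases finite_or_infinite M with hM | hM
  · exact realizesSmallTypes_of_finite 1 v hv p hp
  rw [IsSmall, max_eq_left (aleph0_le_mk M)] at hv
  -- trade the parameters `v` for constants naming them
  let τ (φ : L.Formula (β ⊕ Fin 1)) : (L[[range v]]).Formula (Fin 1) :=
    BoundedFormula.constantsVarsEquiv.symm (φ.relabel (Sum.map (rangeFactorization v) id))
  have hτ (φ : L.Formula (β ⊕ Fin 1)) (x : Fin 1 → M) :
      (τ φ).Realize x ↔ φ.Realize (Sum.elim v x) := by
    rw [Formula.Realize, ← BoundedFormula.realize_constantsVarsEquiv, Equiv.apply_symm_apply,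
      ← Formula.Realize, Formula.realize_relabel]
    congr!
    ext (b | i) <;> rfl
  obtain ⟨a, ha⟩ := h _ hv (τ '' p) fun t ht => by
    obtain ⟨s, hs, rfl⟩ := Finset.subset_set_image_iff.1 ht
    obtain ⟨x, hx⟩ := hp s hs
    refine ⟨x 0, fun ψ hψ => ?_⟩
    obtain ⟨φ, hφ, rfl⟩ := Finset.mem_image.1 hψ
    rw [hτ, show (fun _ => x 0) = x from funext fun i => congrArg x (Subsingleton.elim _ _)]
    exact hx φ hφ
  exact ⟨fun _ => a, fun φ hφ => (hτ φ _).1 (ha _ ⟨φ, hφ, rfl⟩)⟩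

/-- `G` is the graph of a partial elementary map. -/
def IsElementaryGraph (L : FirstOrder.Language.{u, v}) {M : Type w} [L.Structure M]
    (G : Set (M × M)) : Prop :=
  ∀ φ : L.Formula G, φ.Realize (fun p => p.1.1) ↔ φ.Realize (fun p => p.1.2)

theorem isElementaryGraph_range {ι : Type*} (g : ι → M × M)
    (h : ∀ φ : L.Formula ι, φ.Realize (Prod.fst ∘ g) ↔ φ.Realize (Prod.snd ∘ g)) :
    IsElementaryGraph L (range g) := fun φ => by
  simpa [Formula.realize_relabel, Function.comp_def, apply_rangeSplitting] using
    h (φ.relabel (rangeSplitting g))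

namespace IsElementaryGraph

variable {G : Set (M × M)}

theorem mono {G' : Set (M × M)} (h : IsElementaryGraph L G) (hG' : G' ⊆ G) :
    IsElementaryGraph L G' := fun φ => by
  have := h (φ.relabel (inclusion hG'))
  rwa [Formula.realize_relabel, Formula.realize_relabel] at this

theorem swap (h : IsElementaryGraph L G) : IsElementaryGraph L (Prod.swap ⁻¹' G) := fun φ => by
  have := h (φ.relabel fun p => ⟨p.1.swap, p.2⟩)
  rw [Formula.realize_relabel, Formula.realize_relabel] at this
  exact this.symm

theorem eq_of_mem (h : IsElementaryGraph L G) {a b b' : M} (hb : (a, b) ∈ G)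
    (hb' : (a, b') ∈ G) : b = b' := by
  simpa using h ((Term.var ⟨_, hb⟩).equal (Term.var ⟨_, hb'⟩))

theorem of_forall_finite (h : ∀ s ⊆ G, s.Finite → IsElementaryGraph L s) :
    IsElementaryGraph L G := fun φ => by
  classical
  let s : Set (M × M) := (↑) '' (φ.freeVarFinset : Set G)
  let f : φ.freeVarFinset → s := fun p => ⟨p.1, p.1, p.2, rfl⟩
  have key := h s (by rintro _ ⟨p, -, rfl⟩; exact p.2) (φ.freeVarFinset.finite_toSet.image _)
    (φ.restrictFreeVar f)
  rwa [Formula.Realize, Formula.Realize,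
    BoundedFormula.realize_restrictFreeVar (f := f) (fun p : G => p.1.1) fun _ => rfl,
    BoundedFormula.realize_restrictFreeVar (f := f) (fun p : G => p.1.2) fun _ => rfl] at key

theorem iUnion {ι : Type*} [Nonempty ι] {F : ι → Set (M × M)} (hdir : Directed (· ⊆ ·) F)
    (h : ∀ i, IsElementaryGraph L (F i)) : IsElementaryGraph L (⋃ i, F i) :=
  of_forall_finite fun s hs hfin => by
    classical
    obtain ⟨I, hI, hsI⟩ := finite_subset_iUnion hfin hs
    obtain ⟨j, hj⟩ := hdir.finset_le hI.toFinset
    exact (h j).mono (hsI.trans (iUnion₂_subset fun i hi => hj i (hI.mem_toFinset.2 hi)))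

theorem union_iUnion {G₀ : Set (M × M)} {ι : Type*} {F : ι → Set (M × M)}
    (h₀ : IsElementaryGraph L G₀) (hsub : ∀ i, G₀ ⊆ F i) (hdir : Directed (· ⊆ ·) F)
    (h : ∀ i, IsElementaryGraph L (F i)) : IsElementaryGraph L (G₀ ∪ ⋃ i, F i) := by
  rcases isEmpty_or_nonempty ι with _ | _
  · simpa using h₀
  · rw [union_eq_right.2 ((hsub (Classical.arbitrary ι)).trans (subset_iUnion F _))]
    exact iUnion hdir h

theorem exists_forth (hsat : RealizesSmallTypes L M 1) (h : IsElementaryGraph L G)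
    (hG : IsSmall M G) (a : M) : ∃ b, IsElementaryGraph L (insert (a, b) G) := by
  -- `b` realizes the type of `a` over the domain of `G`, transported along `G`
  obtain ⟨y, hy⟩ := hsat (fun p : G => p.1.2) (hG.mono mk_range_le)
    {φ | φ.Realize (Sum.elim (fun p : G => p.1.1) fun _ => a)} fun s hs => by
      have hψ : ((Formula.iInf fun φ : s => φ.1).iExs (Fin 1)).Realize fun p : G => p.1.1 := by
        simpa using ⟨fun _ => a, fun φ hφ => hs hφ⟩
      simpa using (h _).1 hψ
  refine ⟨y 0, ?_⟩
  have hrange : insert (a, y 0) G = range (Sum.elim (↑) fun i => (a, y i) : G ⊕ Fin 1 → M × M) := by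
    rw [Sum.elim_range, Subtype.range_coe, range_unique, union_comm, ← insert_eq]
    congr!
  rw [hrange]
  refine isElementaryGraph_range _ fun φ => ?_
  rw [Sum.comp_elim, Sum.comp_elim]
  exact ⟨hy φ, fun hφ => by_contra fun hn => hy φ.not hn hφ⟩

theorem exists_back (hsat : RealizesSmallTypes L M 1) (h : IsElementaryGraph L G)
    (hG : IsSmall M G) (b : M) : ∃ a, IsElementaryGraph L (insert (a, b) G) := by
  obtain ⟨a, ha⟩ := h.swap.exists_forth hsat
    (hG.mono (mk_preimage_of_injective _ _ Prod.swap_injective)) b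
  refine ⟨a, ?_⟩
  convert ha.swap using 1
  ext ⟨c, d⟩
  simp [Prod.ext_iff, and_comm]

theorem exists_forth_back (hsat : RealizesSmallTypes L M 1)
    (h : IsElementaryGraph L G) (hG : IsSmall M G) (x : M) :
    ∃ q : M × M, IsElementaryGraph L (insert (q.2, x) (insert (x, q.1) G)) := by
  obtain ⟨b, hb⟩ := h.exists_forth hsat hG x
  obtain ⟨a, ha⟩ := hb.exists_back hsat (hG.insert _) x
  exact ⟨(b, a), ha⟩

theorem exists_equiv (h : IsElementaryGraph L G) (hdom : ∀ x, ∃ y, (x, y) ∈ G)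
    (hran : ∀ y, ∃ x, (x, y) ∈ G) : ∃ f : M ≃[L] M, ∀ p ∈ G, f p.1 = p.2 := by
  choose f hf using hdom
  have hfG (p) (hp : p ∈ G) : f p.1 = p.2 := h.eq_of_mem (hf p.1) hp
  let F : M ↪ₑ[L] M := ⟨f, fun k φ x => by
    simpa [Formula.realize_relabel, Function.comp_def] using
      (h (φ.relabel fun i => ⟨(x i, f (x i)), hf _⟩)).symm⟩
  refine ⟨⟨Equiv.ofBijective F ⟨F.injective, fun y => ?_⟩, F.toEmbedding.map_fun',
    F.toEmbedding.map_rel'⟩, hfG⟩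
  obtain ⟨x, hx⟩ := hran y
  exact ⟨x, hfG _ hx⟩

end IsElementaryGraph

section Chain

variable (L) {ι : Type w} [LinearOrder ι] [WellFoundedLT ι] (e : ι → M) (G₀ : Set (M × M))

noncomputable def extensionPair (G : Set (M × M)) (x : M) : M × M :=
  @Classical.epsilon (M × M) ⟨(x, x)⟩ fun q =>
    IsElementaryGraph L (insert (q.2, x) (insert (x, q.1) G))

noncomputable def extendAt (G : Set (M × M)) (x : M) : Set (M × M) :=
  insert ((extensionPair L G x).2, x) (insert (x, (extensionPair L G x).1) G)

noncomputable def chain : ι → Set (M × M) :=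
  wellFounded_lt.fix fun i ih => extendAt L (G₀ ∪ ⋃ j : Iio i, ih j j.2) (e i)

noncomputable def chainBelow (i : ι) : Set (M × M) := G₀ ∪ ⋃ j : Iio i, chain L e G₀ j

theorem chain_eq (i : ι) : chain L e G₀ i = extendAt L (chainBelow L e G₀ i) (e i) :=
  wellFounded_lt.fix_eq _ _

variable {L}

theorem subset_extendAt (G : Set (M × M)) (x : M) : G ⊆ extendAt L G x :=
  (subset_insert _ _).trans (subset_insert _ _)

theorem isElementaryGraph_extendAt (hsat : RealizesSmallTypes L M 1) {G : Set (M × M)}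
    (h : IsElementaryGraph L G) (hG : IsSmall M G) (x : M) :
    IsElementaryGraph L (extendAt L G x) :=
  Classical.epsilon_spec (h.exists_forth_back hsat hG x)

theorem subset_chainBelow (i : ι) : G₀ ⊆ chainBelow L e G₀ i := subset_union_left

theorem chainBelow_subset_chain (i : ι) : chainBelow L e G₀ i ⊆ chain L e G₀ i := by
  rw [chain_eq]; exact subset_extendAt _ _

theorem subset_chain (i : ι) : G₀ ⊆ chain L e G₀ i :=
  (subset_chainBelow e G₀ i).trans (chainBelow_subset_chain e G₀ i)

theorem exists_mem_chain (i : ι) :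
    (∃ y, (e i, y) ∈ chain L e G₀ i) ∧ ∃ y, (y, e i) ∈ chain L e G₀ i := by
  rw [chain_eq]
  exact ⟨⟨_, mem_insert_of_mem _ (mem_insert _ _)⟩, ⟨_, mem_insert _ _⟩⟩

theorem chain_mono : Monotone (chain L e G₀) := by
  intro i j hij
  rcases hij.lt_or_eq with hij | rfl
  · exact (subset_iUnion_of_subset ⟨i, hij⟩ subset_rfl).trans
      (subset_union_right.trans (chainBelow_subset_chain (L := L) e G₀ j))
  · rfl

theorem chain_subset (i : ι) : chain L e G₀ i ⊆ G₀ ∪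
    ((fun j => (e j, (extensionPair L (chainBelow L e G₀ j) (e j)).1)) '' Iic i ∪
      (fun j => ((extensionPair L (chainBelow L e G₀ j) (e j)).2, e j)) '' Iic i) := by
  induction i using WellFoundedLT.induction with
  | _ i ih =>
  rw [chain_eq]
  rintro p (rfl | rfl | hp | hp)
  · exact Or.inr (Or.inr ⟨i, self_mem_Iic, rfl⟩)
  · exact Or.inr (Or.inl ⟨i, self_mem_Iic, rfl⟩)
  · exact Or.inl hp
  · obtain ⟨_, ⟨j, rfl⟩, hp⟩ := hp
    have hji : Iic j.1 ⊆ Iic i := Iic_subset_Iic.2 j.2.le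
    exact union_subset_union_right _ (union_subset_union (image_mono hji) (image_mono hji))
      (ih j j.2 hp)

theorem isSmall_chain (hG₀ : IsSmall M G₀) (hι : ∀ i : ι, IsSmall M (Iio i)) (i : ι) :
    IsSmall M (chain L e G₀ i) := by
  have hi : IsSmall M (Iic i) := by rw [← Iio_insert]; exact (hι i).insert i
  exact (hG₀.union ((hi.mono mk_image_le).union (hi.mono mk_image_le))).mono
    (mk_le_mk_of_subset (chain_subset e G₀ i))

theorem isElementaryGraph_chain (hsat : RealizesSmallTypes L M 1)
    (h₀ : IsElementaryGraph L G₀) (hG₀ : IsSmall M G₀) (hι : ∀ i : ι, IsSmall M (Iio i)) (i : ι) :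
    IsElementaryGraph L (chain L e G₀ i) := by
  induction i using WellFoundedLT.induction with
  | _ i ih =>
  rw [chain_eq]
  refine isElementaryGraph_extendAt hsat ?_
    ((isSmall_chain e G₀ hG₀ hι i).mono (mk_le_mk_of_subset (chainBelow_subset_chain e G₀ i))) _
  exact h₀.union_iUnion (fun j => subset_chain e G₀ j)
    ((chain_mono e G₀).comp (Subtype.mono_coe (· ∈ Iio i))).directed_le fun j => ih j j.2

end Chain

theorem RealizesSmallTypes.exists_equiv_extending (hsat : RealizesSmallTypes L M 1)
    {G₀ : Set (M × M)} (h₀ : IsElementaryGraph L G₀) (hG₀ : IsSmall M G₀) :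
    ∃ f : M ≃[L] M, ∀ p ∈ G₀, f p.1 = p.2 := by
  obtain ⟨e⟩ : Nonempty ((#M).ord.ToType ≃ M) := Cardinal.eq.1 (mk_ord_toType _)
  have hι (i : (#M).ord.ToType) : IsSmall M (Iio i) :=
    lt_max_of_lt_left (by simpa using mk_Iio_lt i)
  have hG : IsElementaryGraph L (G₀ ∪ ⋃ i, chain L e G₀ i) :=
    h₀.union_iUnion (subset_chain e G₀) (chain_mono e G₀).directed_le
      (isElementaryGraph_chain e G₀ hsat h₀ hG₀ hι)
  have hmem (x : M) := e.apply_symm_apply x ▸ exists_mem_chain (L := L) e G₀ (e.symm x)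
  obtain ⟨f, hf⟩ := hG.exists_equiv
    (fun x => (hmem x).1.imp fun _ hy => Or.inr (mem_iUnion_of_mem _ hy))
    (fun x => (hmem x).2.imp fun _ hy => Or.inr (mem_iUnion_of_mem _ hy))
  exact ⟨f, fun p hp => hf p (Or.inl hp)⟩

def SameTypeOver (L : FirstOrder.Language.{u, v}) {M : Type w} [L.Structure M] (A : Set M)
    {α : Type*} (b c : α → M) : Prop :=
  ∀ φ : L.Formula (A ⊕ α), φ.Realize (Sum.elim (↑) b) ↔ φ.Realize (Sum.elim (↑) c)

theorem SameTypeOver.isElementaryGraph {A : Set M} {α : Type*} {b c : α → M}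
    (h : SameTypeOver L A b c) :
    IsElementaryGraph L (range (Sum.elim (fun a : A => ((a : M), (a : M))) fun i => (b i, c i))) :=
  isElementaryGraph_range _ fun φ => by rw [Sum.comp_elim, Sum.comp_elim]; exact h φ

section Definability

variable {L' : FirstOrder.Language} [L'.Structure M] {n : ℕ} {A : Set M} {D : Set (Fin n → M)}
  (χ : L'.Formula (A ⊕ Fin n))

theorem exists_formula_realize_subset (φm : L →ᴸ L') [φm.IsExpansionOn M]
    (hsat : RealizesSmallTypes L' M n) (hA : IsSmall M A)
    (hχ : ∀ x, χ.Realize (Sum.elim (↑) x) ↔ x ∈ D)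
    (hD : ∀ b c, SameTypeOver L A b c → b ∈ D → c ∈ D) {b : Fin n → M} (hb : b ∈ D) :
    ∃ ψ : L.Formula (A ⊕ Fin n), ψ.Realize (Sum.elim (↑) b) ∧
      ∀ x, ψ.Realize (Sum.elim (↑) x) → x ∈ D := by
  by_contra! h
  obtain ⟨c, hcD, hc⟩ := hsat.exists_realize_onFormula φm (v := (↑)) (by rwa [Subtype.range_coe])
    χ.not (fun φ : {φ : L.Formula (A ⊕ Fin n) // φ.Realize (Sum.elim (↑) b)} => φ.1) fun s => by
      obtain ⟨x, hx, hxD⟩ := h (Formula.iInf fun φ : s => φ.1.1)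
        (Formula.realize_iInf.2 fun φ => φ.1.2)
      exact ⟨x, by simpa [hχ] using hxD, fun φ hφ => Formula.realize_iInf.1 hx ⟨φ, hφ⟩⟩
  refine (by simpa [hχ] using hcD : c ∉ D) (hD b c (fun φ => ⟨fun hφ => hc ⟨φ, hφ⟩, ?_⟩) hb)
  exact fun hφ => by_contra fun hn => hc ⟨φ.not, hn⟩ hφ

theorem definable_of_forall_exists_formula (φm : L →ᴸ L') [φm.IsExpansionOn M]
    (hsat : RealizesSmallTypes L' M n) (hA : IsSmall M A)
    (hχ : ∀ x, χ.Realize (Sum.elim (↑) x) ↔ x ∈ D)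
    (hD : ∀ b ∈ D, ∃ ψ : L.Formula (A ⊕ Fin n), ψ.Realize (Sum.elim (↑) b) ∧
      ∀ x, ψ.Realize (Sum.elim (↑) x) → x ∈ D) :
    A.Definable L D := by
  choose ψ hψb hψD using hD
  -- by compactness, finitely many of the `ψ b` already cover `D`
  obtain ⟨s, hs⟩ : ∃ s : Finset D, ∀ x ∈ D, ∃ b ∈ s, (ψ b b.2).Realize (Sum.elim (↑) x) := by
    by_contra! h
    obtain ⟨x, hx, hxψ⟩ := hsat.exists_realize_onFormula φm (v := (↑)) (by rwa [Subtype.range_coe])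
      χ (fun b : D => (ψ b b.2).not) fun s => by
        obtain ⟨x, hx, hxψ⟩ := h s
        exact ⟨x, (hχ x).2 hx, hxψ⟩
    exact hxψ ⟨x, (hχ x).1 hx⟩ (hψb x _)
  refine definable_iff_exists_formula_sum.2 ⟨Formula.iSup fun b : s => ψ b.1 b.1.2, ?_⟩
  ext x
  simp only [mem_ofPred_eq, Formula.realize_iSup]
  refine ⟨fun hx => ?_, fun ⟨b, hb⟩ => hψD _ _ _ hb⟩
  obtain ⟨b, hb, hbx⟩ := hs x hx
  exact ⟨⟨b, hb⟩, hbx⟩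

end Definability

end Paper

open Paper in
/-- If `(M,D)` is saturated and `D` is not `A`-definable, the orbit of `D` over `A`
is not a singleton. -/
theorem stmt5 (L : FirstOrder.Language) (M : Type w) [L.Structure M]
    (n : ℕ) (D : Set (Fin n → M))
    (hD : @IsSaturated (L.sum (relLang n)) M (expStruct L M n D))
    (A : Set M) (hA : #A < #M)
    (hnd : ¬ A.Definable L D) :
    ∃ f : M ≃[L] M, (∀ a ∈ A, f a = a) ∧ (fun x => ⇑f ∘ x) '' D ≠ D := by
  let := expStruct L M n D
  have : (LHom.sumInl : L →ᴸ L.sum (relLang n)).IsExpansionOn M := ⟨fun _ _ => rfl, fun _ _ => rfl⟩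
  have hsat := realizesSmallTypes_one_of_isSaturated hD
  have hA' : IsSmall M A := lt_max_of_lt_left hA
  -- the new relation symbol, applied to the variables
  let χ : (L.sum (relLang n)).Formula (A ⊕ Fin n) :=
    Relations.formula (Sum.inr ⟨rfl⟩) fun i => Term.var (Sum.inr i)
  obtain ⟨b, hb, c, hc, hbc⟩ : ∃ b ∈ D, ∃ c ∉ D, SameTypeOver L A b c := by
    by_contra! h
    exact hnd (definable_of_forall_exists_formula χ LHom.sumInl (hsat.of_one n) hA' (fun _ => .rfl)
      fun b hb => exists_formula_realize_subset χ LHom.sumInl (hsat.of_one n) hA'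
        (fun _ => .rfl) (fun b c hbc hb => by_contra (h b hb c · hbc)) hb)
  obtain ⟨f, hf⟩ := (hsat.of_lhom LHom.sumInl).exists_equiv_extending hbc.isElementaryGraph
    (by rw [Sum.elim_range]; exact (hA'.mono mk_range_le).union (isSmall_of_finite (toFinite _)))
  refine ⟨f, fun a ha => hf _ ⟨.inl ⟨a, ha⟩, rfl⟩, fun h => hc ?_⟩
  rw [← h]
  exact ⟨b, hb, funext fun i => hf _ ⟨.inr i, rfl⟩⟩
end

section
/- Let T be an o-minimal theory, M a model of T, and p(x) a complete non-algebraic 1-type over M. Then p determines a cut M = B₁ ∪ B₂ with B₁ < B₂ such that every element a of any elementary extension of M with B₁ < a < B₂ realizes p. -/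
open FirstOrder FirstOrder.Language Set Cardinal

universe u v w

/-! Let `B₁` be the set of `z ∈ M` with `z < x ∈ p`. Given `φ(v, x) ∈ p`, o-minimality yields a
finite `F ⊆ M` such that on `M \ F` the truth of `φ(v, ·)` depends only on the cut over `F`.
As `p` is finitely satisfiable and non-algebraic, some `b ∈ M \ F` satisfies `φ(v, ·)` and lies
in the cut of `p` over `F`; hence `φ(v, ·)` holds on the whole interval of `M` cut out by `F`.
That is a first-order statement with parameters in `M`, so it transfers along the elementary
embedding to the corresponding interval of `N`, which contains every `a` with `B₁ < a < B₂`. -/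

namespace OMinimalCut

variable {L : Language} [L.IsOrdered]

def paramLtVar : L.Formula (Fin 1 ⊕ Fin 1) :=
  Term.lt (Term.var (Sum.inl (Sum.inl 0))) (Term.var (Sum.inl (Sum.inr 0)))

def paramEqVar : L.Formula (Fin 1 ⊕ Fin 1) :=
  Term.equal (Term.var (Sum.inl 0)) (Term.var (Sum.inr 0))

/-- `∀ x, (⋀ z ∈ lo, z < x) → (⋀ z ∈ hi, x < z) → φ(v, x)`. -/
noncomputable def forallBetween {α β : Type*} (φ : L.Formula (α ⊕ Fin 1)) (lo hi : Finset β) :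
    L.Formula (α ⊕ β) :=
  ((BoundedFormula.iInf fun z : lo =>
      (Term.lt (Term.var (Sum.inl (Sum.inr (z : β)))) (Term.var (Sum.inr 0)) :
        L.BoundedFormula (α ⊕ β) 1)).imp
    ((BoundedFormula.iInf fun z : hi =>
      Term.lt (Term.var (Sum.inr 0)) (Term.var (Sum.inl (Sum.inr (z : β))))).imp
      (BoundedFormula.relabel (Sum.elim (Sum.inl ∘ Sum.inl) fun _ => Sum.inr 0) φ))).all

section

variable {M : Type*} [L.Structure M] [LinearOrder M] [L.OrderedStructure M]

@[simp] lemma realize_paramLtVar {c x : Fin 1 → M} :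
    (paramLtVar : L.Formula _).Realize (Sum.elim c x) ↔ c 0 < x 0 := by
  simp [paramLtVar, Formula.Realize]

omit [L.IsOrdered] [LinearOrder M] [L.OrderedStructure M] in
@[simp] lemma realize_paramEqVar {c x : Fin 1 → M} :
    (paramEqVar : L.Formula _).Realize (Sum.elim c x) ↔ c 0 = x 0 := by
  simp [paramEqVar]

lemma realize_forallBetween {α β : Type*} (φ : L.Formula (α ⊕ Fin 1)) (lo hi : Finset β)
    (v : α → M) (w : β → M) :
    (forallBetween φ lo hi).Realize (Sum.elim v w) ↔
      ∀ x : M, (∀ z ∈ lo, w z < x) → (∀ z ∈ hi, x < w z) →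
        φ.Realize (Sum.elim v fun _ => x) := by
  simp only [forallBetween, Formula.Realize, BoundedFormula.realize_all,
    BoundedFormula.realize_imp, BoundedFormula.realize_iInf, BoundedFormula.realize_relabel,
    Term.realize_lt, Term.realize_var, Subtype.forall]
  refine forall_congr' fun x => ?_
  have hv : (Sum.elim (Sum.elim v w) (Fin.snoc (default : Fin 0 → M) x ∘ Fin.castAdd 0) ∘
      Sum.elim (Sum.inl ∘ Sum.inl) fun _ : Fin 1 => (Sum.inr 0 : (α ⊕ β) ⊕ Fin 1)) =
      Sum.elim v fun _ : Fin 1 => x := by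
    funext i; rcases i with i | i <;> rfl
  simp only [Sum.elim_inl, Sum.elim_inr, hv]
  simp only [Unique.eq_default]
  rfl

lemma realize_of_forall_between {N : Type*} [L.Structure N] [LinearOrder N]
    [L.OrderedStructure N] (g : M ↪ₑ[L] N) {α : Type*} (φ : L.Formula (α ⊕ Fin 1)) (v : α → M)
    (lo hi : Finset M)
    (hM : ∀ x : M, (∀ z ∈ lo, z < x) → (∀ z ∈ hi, x < z) → φ.Realize (Sum.elim v fun _ => x))
    {a : N} (hlo : ∀ z ∈ lo, g z < a) (hhi : ∀ z ∈ hi, a < g z) :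
    φ.Realize (Sum.elim (g ∘ v) fun _ => a) := by
  have hN := (g.map_formula (forallBetween φ lo hi) (Sum.elim v id)).2
    ((realize_forallBetween φ lo hi v id).2 hM)
  rw [Sum.comp_elim, realize_forallBetween] at hN
  exact hN a hlo hhi

omit [L.IsOrdered] [L.OrderedStructure M] in
lemma exists_finset_realize_iff_of_forall_lt_iff
    (hOmin : ∀ (A : Set M) (φ : (L[[A]]).Formula (Fin 1)), ∃ F : Finset M,
      ∀ x y : M, x ∉ F → y ∉ F → (∀ z ∈ F, z < x ↔ z < y) →
        (φ.Realize (fun _ => x) ↔ φ.Realize (fun _ => y)))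
    {α : Type*} (φ : L.Formula (α ⊕ Fin 1)) (v : α → M) :
    ∃ F : Finset M, ∀ x y : M, x ∉ F → y ∉ F → (∀ z ∈ F, z < x ↔ z < y) →
      (φ.Realize (Sum.elim v fun _ => x) ↔ φ.Realize (Sum.elim v fun _ => y)) := by
  let ψ : (L[[(univ : Set M)]]).Formula (Fin 1) := BoundedFormula.constantsVarsEquiv.symm
    (φ.relabel (Sum.map (fun i => (⟨v i, mem_univ _⟩ : (univ : Set M))) id))
  have hψ : ∀ x : M, ψ.Realize (fun _ => x) ↔ φ.Realize (Sum.elim v fun _ => x) := by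
    intro x
    rw [Formula.Realize, ← BoundedFormula.realize_constantsVarsEquiv, Equiv.apply_symm_apply,
      ← Formula.Realize, Formula.realize_relabel]
    congr! 1
    funext i
    rcases i with i | i <;> simp
  obtain ⟨F, hF⟩ := hOmin univ ψ
  exact ⟨F, fun x y hx hy hxy => by rw [← hψ, ← hψ]; exact hF x y hx hy hxy⟩

end

section CompleteType

variable {M : Type*} [L.Structure M] [LinearOrder M] [L.OrderedStructure M]

/-- A formula `φ(v, x)` with parameters `v` from `M`; a 1-type over `M` is a set of these. -/
abbrev ParamFormula (L : Language) (M : Type*) := Σ n : ℕ, L.Formula (Fin n ⊕ Fin 1) × (Fin n → M)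

def ParamFormula.Realize (e : ParamFormula L M) (a : M) : Prop :=
  e.2.1.Realize (Sum.elim e.2.2 fun _ => a)

/-- The elements of `M` lying below a realization of `p`. -/
def lowerCut (p : Set (ParamFormula L M)) : Set M :=
  {z | ⟨1, paramLtVar, fun _ => z⟩ ∈ p}

variable {p : Set (ParamFormula L M)}
  (hfin : ∀ S : Finset (ParamFormula L M), ↑S ⊆ p → ∃ a : M, ∀ e ∈ S, e.Realize a)
  (hcomp : ∀ (n : ℕ) (φ : L.Formula (Fin n ⊕ Fin 1)) (v : Fin n → M),
    (⟨n, φ, v⟩ : ParamFormula L M) ∈ p ∨ ⟨n, φ.not, v⟩ ∈ p)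
include hfin hcomp

lemma lt_of_mem_lowerCut_of_notMem {x y : M} (hx : x ∈ lowerCut p) (hy : y ∉ lowerCut p) :
    x < y := by
  classical
  have hx' : ⟨1, paramLtVar, fun _ => x⟩ ∈ p := hx
  have hy' : ⟨1, paramLtVar.not, fun _ => y⟩ ∈ p := (hcomp 1 _ _).resolve_left hy
  obtain ⟨a, ha⟩ := hfin {⟨1, paramLtVar, fun _ => x⟩, ⟨1, paramLtVar.not, fun _ => y⟩}
    (by simp [insert_subset_iff, hx', hy'])
  have hxa : x < a := by
    simpa [ParamFormula.Realize] using ha ⟨1, paramLtVar, fun _ => x⟩ (by simp)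
  have hya : ¬ y < a := by
    simpa [ParamFormula.Realize] using ha ⟨1, paramLtVar.not, fun _ => y⟩ (by simp)
  exact hxa.trans_le (not_lt.1 hya)

variable (hnalg : ¬ ∃ a : M, ∀ e ∈ p, e.Realize a)
include hnalg

omit [L.IsOrdered] [L.OrderedStructure M] in
lemma neg_paramEqVar_mem (z : M) : ⟨1, paramEqVar.not, fun _ => z⟩ ∈ p := by
  classical
  refine (hcomp 1 _ _).resolve_left fun hz => hnalg ⟨z, fun e he => ?_⟩
  obtain ⟨b, hb⟩ := hfin {⟨1, paramEqVar, fun _ => z⟩, e} (by simp [insert_subset_iff, hz, he])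
  have hzb : z = b := by
    simpa [ParamFormula.Realize] using hb ⟨1, paramEqVar, fun _ => z⟩ (by simp)
  exact hzb ▸ hb e (by simp)

lemma exists_realize_notMem_lt_iff_mem_lowerCut (S : Finset (ParamFormula L M)) (hS : ↑S ⊆ p)
    (F : Finset M) :
    ∃ b : M, (∀ e ∈ S, e.Realize b) ∧ b ∉ F ∧ ∀ z ∈ F, (z < b ↔ z ∈ lowerCut p) := by
  classical
  let cutLiterals (z : M) : Finset (ParamFormula L M) :=
    {⟨1, paramLtVar, fun _ => z⟩, ⟨1, paramLtVar.not, fun _ => z⟩,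
      ⟨1, paramEqVar.not, fun _ => z⟩}
  obtain ⟨b, hb⟩ := hfin (S ∪ (F.biUnion cutLiterals).filter (· ∈ p)) (by
    intro e he
    rcases Finset.mem_union.1 he with he | he
    exacts [hS he, (Finset.mem_filter.1 he).2])
  have hlit : ∀ z ∈ F, ∀ e ∈ cutLiterals z, e ∈ p → e.Realize b := fun z hz e he hep =>
    hb e (Finset.mem_union_right _ (Finset.mem_filter.2 ⟨Finset.mem_biUnion.2 ⟨z, hz, he⟩, hep⟩))
  refine ⟨b, fun e he => hb e (Finset.mem_union_left _ he), fun hbF => ?_, fun z hz => ?_⟩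
  · have := hlit b hbF _ (by simp [cutLiterals]) (neg_paramEqVar_mem hfin hcomp hnalg b)
    simp only [ParamFormula.Realize, Formula.realize_not, realize_paramEqVar, not_true_eq_false]
      at this
  · by_cases hzp : z ∈ lowerCut p
    · have := hlit z hz _ (by simp [cutLiterals]) hzp
      simpa [ParamFormula.Realize, hzp] using this
    · have := hlit z hz _ (by simp [cutLiterals]) ((hcomp 1 _ _).resolve_left hzp)
      simpa [ParamFormula.Realize, hzp] using this

lemma realize_of_lt_iff_mem_lowerCut {n : ℕ} {φ : L.Formula (Fin n ⊕ Fin 1)} {v : Fin n → M}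
    (he : ⟨n, φ, v⟩ ∈ p) {F : Finset M}
    (hF : ∀ x y : M, x ∉ F → y ∉ F → (∀ z ∈ F, z < x ↔ z < y) →
      (φ.Realize (Sum.elim v fun _ => x) ↔ φ.Realize (Sum.elim v fun _ => y)))
    {x : M} (hlo : ∀ z ∈ F, z ∈ lowerCut p → z < x) (hhi : ∀ z ∈ F, z ∉ lowerCut p → x < z) :
    φ.Realize (Sum.elim v fun _ => x) := by
  obtain ⟨b, hb, hbF, hbcut⟩ :=
    exists_realize_notMem_lt_iff_mem_lowerCut hfin hcomp hnalg {⟨n, φ, v⟩} (by simpa) F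
  have hxF : x ∉ F := fun hxF => by
    by_cases h : x ∈ lowerCut p
    exacts [lt_irrefl x (hlo x hxF h), lt_irrefl x (hhi x hxF h)]
  refine (hF x b hxF hbF fun z hz => ?_).2 (hb _ (Finset.mem_singleton_self _))
  rw [hbcut z hz]
  by_cases h : z ∈ lowerCut p
  exacts [iff_of_true (hlo z hz h) h, iff_of_false (hhi z hz h).asymm h]

end CompleteType

end OMinimalCut

open OMinimalCut in
theorem stmt15_general (L : FirstOrder.Language) [L.IsOrdered] (M : Type w) [L.Structure M]
    [LinearOrder M] [L.OrderedStructure M]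
    (hOmin : ∀ (A : Set M) (φ : (L[[A]]).Formula (Fin 1)), ∃ F : Finset M,
      ∀ x y : M, x ∉ F → y ∉ F → (∀ z ∈ F, z < x ↔ z < y) →
        (φ.Realize (fun _ => x) ↔ φ.Realize (fun _ => y)))
    (p : Set (Σ n : ℕ, L.Formula (Fin n ⊕ Fin 1) × (Fin n → M)))
    (hfin : ∀ S : Finset (Σ n : ℕ, L.Formula (Fin n ⊕ Fin 1) × (Fin n → M)), ↑S ⊆ p →
      ∃ a : M, ∀ e ∈ S, e.2.1.Realize (Sum.elim e.2.2 fun _ => a))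
    (hcomp : ∀ (n : ℕ) (φ : L.Formula (Fin n ⊕ Fin 1)) (v : Fin n → M),
      (⟨n, φ, v⟩ : Σ n : ℕ, L.Formula (Fin n ⊕ Fin 1) × (Fin n → M)) ∈ p ∨
      (⟨n, φ.not, v⟩ : Σ n : ℕ, L.Formula (Fin n ⊕ Fin 1) × (Fin n → M)) ∈ p)
    (hnalg : ¬ ∃ a : M, ∀ e ∈ p, e.2.1.Realize (Sum.elim e.2.2 fun _ => a)) :
    ∃ B₁ B₂ : Set M, B₁ ∪ B₂ = Set.univ ∧ (∀ x ∈ B₁, ∀ y ∈ B₂, x < y) ∧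
      ∀ (N : Type w) [L.Structure N] [LinearOrder N] [L.OrderedStructure N],
        ∀ (g : M ↪ₑ[L] N) (a : N),
          (∀ x ∈ B₁, g x < a) → (∀ y ∈ B₂, a < g y) →
          ∀ e ∈ p, e.2.1.Realize (Sum.elim (⇑g ∘ e.2.2) fun _ => a) := by
  classical
  refine ⟨lowerCut p, (lowerCut p)ᶜ, union_compl_self _,
    fun x hx y hy => lt_of_mem_lowerCut_of_notMem hfin hcomp hx hy, ?_⟩
  rintro N _ _ _ g a ha₁ ha₂ ⟨n, φ, v⟩ he
  obtain ⟨F, hF⟩ := exists_finset_realize_iff_of_forall_lt_iff hOmin φ v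
  refine realize_of_forall_between g φ v (F.filter (· ∈ lowerCut p)) (F.filter (· ∉ lowerCut p))
    (fun x hlo hhi => realize_of_lt_iff_mem_lowerCut hfin hcomp hnalg he hF
      (fun z hz h => hlo z (Finset.mem_filter.2 ⟨hz, h⟩))
      (fun z hz h => hhi z (Finset.mem_filter.2 ⟨hz, h⟩)))
    (fun z hz => ha₁ z (Finset.mem_filter.1 hz).2) (fun z hz => ha₂ z (Finset.mem_filter.1 hz).2)

open Paper in
/-- In an o-minimal theory, a complete non-algebraic 1-type over a model `M` determines a
cut `(B₁, B₂)` of `M`, and any element of an elementary extension lying in this cut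
realizes the type. -/
theorem stmt15 (L : FirstOrder.Language) [L.IsOrdered] (M : Type w) [L.Structure M]
    [LinearOrder M] [L.OrderedStructure M] [DenselyOrdered M]
    (hOmin : ∀ (A : Set M) (φ : (L[[A]]).Formula (Fin 1)), ∃ F : Finset M,
      ∀ x y : M, x ∉ F → y ∉ F → (∀ z ∈ F, z < x ↔ z < y) →
        (φ.Realize (fun _ => x) ↔ φ.Realize (fun _ => y)))
    (p : Set (Σ n : ℕ, L.Formula (Fin n ⊕ Fin 1) × (Fin n → M)))
    (hfin : ∀ S : Finset (Σ n : ℕ, L.Formula (Fin n ⊕ Fin 1) × (Fin n → M)), ↑S ⊆ p →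
      ∃ a : M, ∀ e ∈ S, e.2.1.Realize (Sum.elim e.2.2 fun _ => a))
    (hcomp : ∀ (n : ℕ) (φ : L.Formula (Fin n ⊕ Fin 1)) (v : Fin n → M),
      (⟨n, φ, v⟩ : Σ n : ℕ, L.Formula (Fin n ⊕ Fin 1) × (Fin n → M)) ∈ p ∨
      (⟨n, φ.not, v⟩ : Σ n : ℕ, L.Formula (Fin n ⊕ Fin 1) × (Fin n → M)) ∈ p)
    (hnalg : ¬ ∃ a : M, ∀ e ∈ p, e.2.1.Realize (Sum.elim e.2.2 fun _ => a)) :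
    ∃ B₁ B₂ : Set M, B₁ ∪ B₂ = Set.univ ∧ (∀ x ∈ B₁, ∀ y ∈ B₂, x < y) ∧
      ∀ (N : Type w) [L.Structure N] [LinearOrder N] [L.OrderedStructure N],
        ∀ (g : M ↪ₑ[L] N) (a : N),
          (∀ x ∈ B₁, g x < a) → (∀ y ∈ B₂, a < g y) →
          ∀ e ∈ p, e.2.1.Realize (Sum.elim (⇑g ∘ e.2.2) fun _ => a) :=
  stmt15_general L M hOmin p hfin hcomp hnalg
end
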